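/- Let v, w, u ∈ ℝ³, and let α > 0 and β be real numbers such that v₁ − βv₀, w₁ − βw₀, and u₁ − βu₀ are all nonzero. If ν_{α,β}(v) = ν_{α,β}(w) and ν_{α,β}(v) = ν_{α,β}(u), then v, w, and u are linearly dependent in ℝ³. -/
import Mathlib


/-- The tilt slope `ν_{α,β}` of a vector `v = (H³·ch₀, H²·ch₁, H·ch₂) ∈ ℝ³`. -/
noncomputable def tiltSlope (α β : ℝ) (v : Fin 3 → ℝ) : ℝ :=
  (v 2 - β * v 1 + (β ^ 2 - α ^ 2) / 2 * v 0) / (v 1 - β * v 0)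

/-- Part (2) of the structure theorem for walls in tilt stability: if two numerical walls
intersect at a point `(α, β)` of the upper half-plane, then `v`, `w`, `u` are linearly
dependent. -/
theorem stmt_14 (v w u : Fin 3 → ℝ) (α β : ℝ) (hα : 0 < α)
    (hv : v 1 - β * v 0 ≠ 0) (hw : w 1 - β * w 0 ≠ 0) (hu : u 1 - β * u 0 ≠ 0)
    (h1 : tiltSlope α β v = tiltSlope α β w)
    (h2 : tiltSlope α β v = tiltSlope α β u) :
    ¬ LinearIndependent ℝ ![v, w, u] := by
  intro hli
  set ν : ℝ := tiltSlope α β v with hν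
  set c : ℝ := (β ^ 2 - α ^ 2) / 2 with hc
  -- the linear functional vanishing on all three vectors
  set φ : (Fin 3 → ℝ) →ₗ[ℝ] ℝ :=
    (c + ν * β) • LinearMap.proj 0 + (-(β + ν)) • LinearMap.proj 1 + LinearMap.proj 2 with hφ
  have hφapp : ∀ x : Fin 3 → ℝ, φ x = (c + ν * β) * x 0 + (-(β + ν)) * x 1 + x 2 := by
    intro x; simp [hφ]
  have key : ∀ x : Fin 3 → ℝ, x 1 - β * x 0 ≠ 0 → tiltSlope α β x = ν → φ x = 0 := by
    intro x hx hxν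
    have : (x 2 - β * x 1 + c * x 0) / (x 1 - β * x 0) = ν := hxν
    have h := (div_eq_iff hx).mp this
    rw [hφapp]; linarith [h, mul_comm ν (x 1 - β * x 0)]
  have hvmem : v ∈ LinearMap.ker φ := key v hv rfl
  have hwmem : w ∈ LinearMap.ker φ := key w hw h1.symm
  have humem : u ∈ LinearMap.ker φ := key u hu h2.symm
  have hmem : ∀ i : Fin 3, ![v, w, u] i ∈ LinearMap.ker φ := by
    intro i
    fin_cases i
    · exact hvmem
    · exact hwmem
    · exact humem
  -- φ is surjective
  have hsurj : Function.Surjective φ := by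
    intro r
    refine ⟨![0, 0, r], ?_⟩
    rw [hφapp]; simp
  have hrange : LinearMap.range φ = ⊤ := LinearMap.range_eq_top.mpr hsurj
  have hker : Module.finrank ℝ (LinearMap.ker φ) = 2 := by
    have h3 := LinearMap.finrank_range_add_finrank_ker φ
    rw [hrange] at h3
    simp [Module.finrank_self, Module.finrank_fin_fun] at h3
    omega
  -- restrict the family to the kernel
  have hli' : LinearIndependent ℝ (fun i : Fin 3 =>
      (⟨![v, w, u] i, hmem i⟩ : LinearMap.ker φ)) := by
    exact (linearIndependent_iff'.mpr fun s g hg i hi => by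
      have := linearIndependent_iff'.mp hli s g ?_ i hi
      · exact this
      · have := congrArg (Subtype.val) hg
        simpa using this)
  have hcard := hli'.fintype_card_le_finrank
  rw [hker] at hcard
  simp at hcard
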